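/- Coupling identity for Minkowski sums: For finite sets A, B ⊆ ℝ^K, ND(A + B) = ND(ND(A) + ND(B)), where A + B denotes the Minkowski sum {a + b : a ∈ A, b ∈ B}. In particular, to couple two label sets it suffices to retain only their nondominated labels. -/

import Mathlib

open Pointwise

/-- `y` dominates `y'`: componentwise at least as large and not equal. -/
def dominates {K : ℕ} (y y' : Fin K → ℝ) : Prop :=
  (∀ k, y' k ≤ y k) ∧ y ≠ y'

/-- The nondominated subset of `S`. -/
def ND {K : ℕ} (S : Set (Fin K → ℝ)) : Set (Fin K → ℝ) :=
  {y ∈ S | ¬ ∃ y' ∈ S, dominates y' y}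

/-! Nondominated points are the maximal points for the componentwise order. Below a maximal
point of `A + B` sits a sum of maximal points of `A` and `B`, which must then equal it; so
both sides of the identity have the same maximal points, since every point of either sum lies
below a sum of maximal points. -/

section MaximalAdd

variable {α : Type*} {A B : Set α}

lemma setOf_maximal_add_subset [Add α] [LE α] :
    {x | Maximal (· ∈ A) x} + {x | Maximal (· ∈ B) x} ⊆ A + B :=
  Set.add_subset_add (fun _ h ↦ h.prop) (fun _ h ↦ h.prop)

variable [AddCommMonoid α] [PartialOrder α] [IsOrderedAddMonoid α]

lemma exists_le_mem_setOf_maximal_add (hA : A.Finite) (hB : B.Finite) {z : α}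
    (hz : z ∈ A + B) :
    ∃ w ∈ {x | Maximal (· ∈ A) x} + {x | Maximal (· ∈ B) x}, z ≤ w := by
  obtain ⟨a, ha, b, hb, rfl⟩ := hz
  obtain ⟨a', haa', ha'⟩ := hA.exists_le_maximal ha
  obtain ⟨b', hbb', hb'⟩ := hB.exists_le_maximal hb
  exact ⟨a' + b', Set.add_mem_add ha' hb', add_le_add haa' hbb'⟩

theorem setOf_maximal_add (hA : A.Finite) (hB : B.Finite) :
    {x | Maximal (· ∈ A + B) x} =
      {x | Maximal (· ∈ {x | Maximal (· ∈ A) x} + {x | Maximal (· ∈ B) x}) x} := by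
  ext y
  constructor
  · intro hy
    obtain ⟨w, hw, hyw⟩ := exists_le_mem_setOf_maximal_add hA hB hy.prop
    have hy_eq : y = w := hyw.antisymm (hy.2 (setOf_maximal_add_subset hw) hyw)
    exact hy.mono (fun _ hx ↦ setOf_maximal_add_subset hx) (hy_eq ▸ hw)
  · intro hy
    refine ⟨setOf_maximal_add_subset hy.prop, fun z hz hyz ↦ ?_⟩
    obtain ⟨w, hw, hzw⟩ := exists_le_mem_setOf_maximal_add hA hB hz
    exact hzw.trans (hy.2 hw (hyz.trans hzw))

end MaximalAdd

lemma dominates_iff_lt {K : ℕ} {y y' : Fin K → ℝ} : dominates y y' ↔ y' < y := by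
  rw [lt_iff_le_and_ne, dominates, Pi.le_def, ne_comm]

lemma ND_eq_setOf_maximal {K : ℕ} (S : Set (Fin K → ℝ)) :
    ND S = {y | Maximal (· ∈ S) y} := by
  ext y
  simp only [ND, dominates_iff_lt, maximal_iff_forall_gt, Set.mem_ofPred_eq, not_exists, not_and]
  exact and_congr_right fun _ ↦ ⟨fun h z hz hyz ↦ h z hyz hz, fun h z hz hyz ↦ h hyz hz⟩

/-- **Coupling identity for Minkowski sums.**  For finite `A, B ⊆ ℝ^K`,
`ND(A + B) = ND(ND(A) + ND(B))`, where `+` is the Minkowski sum. -/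
theorem ND_minkowski {K : ℕ} (A B : Set (Fin K → ℝ)) (hA : A.Finite) (hB : B.Finite) :
    ND (A + B) = ND (ND A + ND B) := by
  simp only [ND_eq_setOf_maximal]
  exact setOf_maximal_add hA hB
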